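/- arXiv:2501.03003 — 2 statements merged into one kernel-verified Lean document; each statement's English description precedes it below -/
import Mathlib

section
/- Let G be a primitive soluble permutation group on a finite set Δ of size n ≥ 2. Then I(G) ≤ log₂(n) + 1. -/
/-- The pointwise stabiliser, inside the subgroup `H`, of a list of points. -/
def ptStab {G : Type*} [Group G] {Δ : Type*} [MulAction G Δ] (H : Subgroup G)
    (l : List Δ) : Subgroup G :=
  H ⊓ ⨅ δ ∈ l, MulAction.stabilizer G δ

/-- `l` is an irredundant base for the subgroup `H` acting on `Δ`: the pointwise
stabilisers of its prefixes are strictly decreasing, starting from `H` and ending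
with the trivial group. -/
def IsIrredundantBase {G : Type*} [Group G] {Δ : Type*} [MulAction G Δ] (H : Subgroup G)
    (l : List Δ) : Prop :=
  (∀ i < l.length, ptStab H (l.take (i + 1)) < ptStab H (l.take i)) ∧ ptStab H l = ⊥

/-- `I(H)`: the maximum length of an irredundant base for the subgroup `H` acting on `Δ`. -/
noncomputable def maxIrr {G : Type*} [Group G] (H : Subgroup G) (Δ : Type*) [MulAction G Δ] : ℕ :=
  sSup {k | ∃ l : List Δ, IsIrredundantBase H l ∧ l.length = k}

/-- A permutation group `G ≤ Sym(Δ)` is primitive if it is transitive and all of its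
blocks are trivial. -/
def IsPrimitiveSubgroup {Δ : Type*} (G : Subgroup (Equiv.Perm Δ)) : Prop :=
  MulAction.IsPretransitive G Δ ∧
    ∀ B : Set Δ, MulAction.IsBlock G B → B.Subsingleton ∨ B = Set.univ

/-!
A soluble primitive group `G` has a transitive abelian normal subgroup `A` (the last nontrivial
term of its derived series), and a transitive abelian group acts regularly. Let `x` be the first
point of an irredundant base and `c y ∈ A` the element with `c y • x = y`. An element of `G_x`
fixes `y` iff it commutes with `c y`, so the pointwise stabiliser of `x, y₁, …, yᵢ` is `G_x`
intersected with the centraliser of `⟨c y₁, …, c yᵢ⟩`. Irredundancy makes these subgroups of `A`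
strictly increasing, whence `2 ^ (k - 1) ≤ |A| = n` for a base of length `k`.
-/

open MulAction

namespace Subgroup

variable {K : Type*} [Group K]

theorem two_mul_card_le_card_of_lt [Finite K] {H L : Subgroup K} (h : H < L) :
    2 * Nat.card H ≤ Nat.card L := by
  obtain ⟨q, hq⟩ := card_dvd_of_le h.le
  have hq1 : q ≠ 1 := fun h1 => h.ne (eq_of_le_of_card_ge h.le (by simp [hq, h1]))
  have hq0 : q ≠ 0 := by rintro rfl; simp [Nat.card_pos.ne'] at hq
  rw [hq, mul_comm 2]
  exact Nat.mul_le_mul_left _ (by omega)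

theorem two_pow_mul_card_le_card_of_lt_succ [Finite K] (C : ℕ → Subgroup K) {m : ℕ}
    (hC : ∀ i < m, C i < C (i + 1)) : 2 ^ m * Nat.card (C 0) ≤ Nat.card (C m) := by
  induction m with
  | zero => simp
  | succ m ih =>
    calc 2 ^ (m + 1) * Nat.card (C 0) = 2 * (2 ^ m * Nat.card (C 0)) := by ring
      _ ≤ 2 * Nat.card (C m) := Nat.mul_le_mul_left 2 (ih fun i hi => hC i (by omega))
      _ ≤ Nat.card (C (m + 1)) := two_mul_card_le_card_of_lt (hC m m.lt_succ_self)

end Subgroup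

open scoped commutatorElement in
theorem exists_normal_isMulCommutative_ne_bot (G : Type*) [Group G] [Group.IsSolvable G]
    [Nontrivial G] : ∃ N : Subgroup G, N.Normal ∧ IsMulCommutative N ∧ N ≠ ⊥ := by
  classical
  have hex : ∃ m, derivedSeries G m = ⊥ := Group.IsSolvable.solvable
  obtain ⟨m, hm⟩ : ∃ m, Nat.find hex = m + 1 := Nat.exists_eq_succ_of_ne_zero fun h0 => by
    simpa [h0] using Nat.find_spec hex
  refine ⟨derivedSeries G m, derivedSeries_normal G m, .of_comm fun a b => Subtype.ext ?_,
    Nat.find_min hex (by omega)⟩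
  have hab : ⁅(a : G), (b : G)⁆ ∈ derivedSeries G (m + 1) :=
    Subgroup.commutator_mem_commutator a.2 b.2
  rw [← hm, Nat.find_spec hex, Subgroup.mem_bot] at hab
  exact (commutatorElement_eq_one_iff_commute.mp hab).eq

theorem MulAction.isCancelSMul_of_isMulCommutative (A X : Type*) [Group A]
    [IsMulCommutative A] [MulAction A X] [FaithfulSMul A X] [IsPretransitive A X] :
    IsCancelSMul A X := by
  refine isCancelSMul_iff_eq_one_of_smul_eq.mpr fun a x h => ?_
  refine eq_of_smul_eq_smul (α := X) fun y => ?_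
  obtain ⟨b, rfl⟩ := exists_smul_eq A x y
  rw [smul_smul, mul_comm', mul_smul, h, one_smul]

theorem MulAction.exists_normal_isMulCommutative_isPretransitive (G X : Type*) [Group G]
    [Group.IsSolvable G] [MulAction G X] [FaithfulSMul G X] [IsQuasiPreprimitive G X] :
    ∃ N : Subgroup G, N.Normal ∧ IsMulCommutative N ∧ IsPretransitive N X := by
  rcases subsingleton_or_nontrivial G with hG | hG
  · refine ⟨⊥, inferInstance, inferInstance, ⟨fun x y => ⟨1, ?_⟩⟩⟩
    obtain ⟨g, rfl⟩ := exists_smul_eq G x y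
    rw [Subsingleton.elim g 1, one_smul, one_smul]
  · obtain ⟨N, hN, hNcomm, hNbot⟩ := exists_normal_isMulCommutative_ne_bot G
    refine ⟨N, hN, hNcomm, IsQuasiPreprimitive.isPretransitive_of_normal fun hfix => hNbot ?_⟩
    refine (Subgroup.eq_bot_iff_forall N).mpr fun n hn => eq_of_smul_eq_smul (α := X) fun x => ?_
    rw [one_smul]
    exact (Set.eq_univ_iff_forall.mp hfix x) ⟨n, hn⟩

section PointwiseStabiliser

variable {P α : Type*} [Group P] [MulAction P α]

theorem mem_ptStab {H : Subgroup P} {l : List α} {g : P} :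
    g ∈ ptStab H l ↔ g ∈ H ∧ ∀ δ ∈ l, g • δ = δ := by
  simp [ptStab, Subgroup.mem_iInf, mem_stabilizer_iff]

theorem smul_smul_eq_iff_commute {A : Subgroup P} {x : α} (hfree : ∀ a ∈ A, a • x = x → a = 1)
    {g a : P} (hg : g ∈ Subgroup.normalizer (A : Set P)) (hgx : g • x = x) (ha : a ∈ A) :
    g • a • x = a • x ↔ Commute g a := by
  have hconj : g * a * g⁻¹ ∈ A := (Subgroup.mem_normalizer_iff.mp hg a).mp ha
  constructor
  · intro h
    have hfix : (a⁻¹ * (g * a * g⁻¹)) • x = x := by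
      rw [mul_smul, mul_smul, mul_smul, inv_smul_eq_iff.mpr hgx.symm, h, inv_smul_smul]
    have := hfree _ (A.mul_mem (A.inv_mem ha) hconj) hfix
    rw [inv_mul_eq_one, eq_mul_inv_iff_mul_eq] at this
    exact this.symm
  · intro h
    rw [← mul_smul, h.eq, mul_smul, hgx]

theorem ptStab_cons_eq_inf_centralizer {H A : Subgroup P}
    (hH : H ≤ Subgroup.normalizer (A : Set P)) {x : α} (hfree : ∀ a ∈ A, a • x = x → a = 1)
    {c : α → P} (hcA : ∀ y, c y ∈ A) (hc : ∀ y, c y • x = y) (s : List α) :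
    ptStab H (x :: s) = ptStab H [x] ⊓ Subgroup.centralizer (c '' {y | y ∈ s}) := by
  ext g
  simp only [Subgroup.mem_inf, mem_ptStab, List.forall_mem_cons, List.not_mem_nil,
    IsEmpty.forall_iff, implies_true, true_and, Subgroup.mem_centralizer_iff,
    Set.forall_mem_image, Set.mem_ofPred_eq, and_assoc, and_congr_right_iff]
  intro hgH hgx
  refine forall₂_congr fun y _ => ?_
  conv_lhs => rw [← hc y]
  exact (smul_smul_eq_iff_commute hfree (hH hgH) hgx (hcA y)).trans eq_comm

theorem map_subtype_ptStab_top (H : Subgroup P) (l : List α) :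
    (ptStab (⊤ : Subgroup H) l).map H.subtype = ptStab H l := by
  ext g
  simp [mem_ptStab, Subgroup.mem_map, Subgroup.smul_def, and_comm]

theorem isIrredundantBase_top_iff {H : Subgroup P} {l : List α} :
    IsIrredundantBase (⊤ : Subgroup H) l ↔ IsIrredundantBase H l := by
  simp only [IsIrredundantBase, ← map_subtype_ptStab_top H,
    Subgroup.map_lt_map_iff_of_injective H.subtype_injective,
    Subgroup.map_eq_bot_iff_of_injective _ H.subtype_injective]

theorem IsIrredundantBase.two_pow_length_le_card [FaithfulSMul P α] [Finite α]
    {H A : Subgroup P} [IsMulCommutative A] [IsPretransitive A α]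
    (hH : H ≤ Subgroup.normalizer (A : Set P)) {x : α} {t : List α}
    (hl : IsIrredundantBase H (x :: t)) : 2 ^ t.length ≤ Nat.card α := by
  have : Finite P := Finite.of_injective _ (toPerm_injective (α := P) (β := α))
  have : IsCancelSMul A α := isCancelSMul_of_isMulCommutative A α
  have hfree : ∀ a ∈ A, a • x = x → a = 1 := fun a ha h =>
    congrArg Subtype.val (IsCancelSMul.eq_one_of_smul (g := (⟨a, ha⟩ : A)) h)
  choose c hc using exists_smul_eq A x
  let C : ℕ → Subgroup P := fun i =>
    Subgroup.closure ((fun y => (c y : P)) '' {y | y ∈ t.take i})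
  have hstab : ∀ i, ptStab H (x :: t.take i) = ptStab H [x] ⊓ Subgroup.centralizer (C i) :=
    fun i => by
      rw [ptStab_cons_eq_inf_centralizer hH hfree (fun y => (c y).2) hc,
        Subgroup.centralizer_closure]
  have hC : ∀ i < t.length, C i < C (i + 1) := by
    intro i hi
    refine lt_of_le_of_ne (Subgroup.closure_mono (Set.image_mono fun y hy => ?_)) fun heq => ?_
    · exact (List.take_subset_take_left t i.le_succ) hy
    · have hlt := hl.1 (i + 1) (by simpa using hi)
      rw [List.take_succ_cons, List.take_succ_cons, hstab, hstab, heq] at hlt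
      exact hlt.ne rfl
  calc 2 ^ t.length = 2 ^ t.length * Nat.card (C 0) := by simp [C]
    _ ≤ Nat.card (C t.length) := Subgroup.two_pow_mul_card_le_card_of_lt_succ C hC
    _ ≤ Nat.card A := Subgroup.card_le_of_le (Subgroup.closure_le _ |>.mpr (by
        rintro _ ⟨y, -, rfl⟩; exact (c y).2))
    _ ≤ Nat.card α :=
        Nat.card_le_card_of_injective _ fun a b h => IsCancelSMul.right_cancel a b x h

end PointwiseStabiliser

theorem maxIrr_le_of_forall_length_le {P : Type*} [Group P] {H : Subgroup P} {Δ : Type*}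
    [MulAction P Δ] {b : ℕ} (h : ∀ l : List Δ, IsIrredundantBase H l → l.length ≤ b) :
    maxIrr H Δ ≤ b :=
  csSup_le' <| by rintro k ⟨l, hl, rfl⟩; exact h l hl

theorem IsPrimitiveSubgroup.isPreprimitive {Δ : Type*} {G : Subgroup (Equiv.Perm Δ)}
    (hG : IsPrimitiveSubgroup G) : IsPreprimitive G Δ :=
  { toIsPretransitive := hG.1, isTrivialBlock_of_isBlock := hG.2 _ }

theorem maxIrr_le_log_of_primitive_solvable_general (Δ : Type*) [Fintype Δ]
    (G : Subgroup (Equiv.Perm Δ)) (hsol : IsSolvable G) (hprim : IsPrimitiveSubgroup G) :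
    (maxIrr G Δ : ℝ) ≤ Real.logb 2 (Fintype.card Δ) + 1 := by
  have : Group.IsSolvable G := hsol
  have := hprim.isPreprimitive
  obtain ⟨A, hA, _, _⟩ := exists_normal_isMulCommutative_isPretransitive G Δ
  have hlength (l : List Δ) (hl : IsIrredundantBase G l) :
      l.length ≤ Nat.log 2 (Fintype.card Δ) + 1 := by
    obtain _ | ⟨x, t⟩ := l
    · exact Nat.zero_le _
    · have := (isIrredundantBase_top_iff.mpr hl).two_pow_length_le_card
        (le_top.trans (Subgroup.normalizer_eq_top (H := A)).ge)
      rw [Nat.card_eq_fintype_card] at this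
      simpa using Nat.le_log_of_pow_le one_lt_two this
  calc (maxIrr G Δ : ℝ) ≤ (Nat.log 2 (Fintype.card Δ) : ℝ) + 1 := by
        exact_mod_cast maxIrr_le_of_forall_length_le hlength
    _ ≤ Real.logb 2 (Fintype.card Δ) + 1 := by
        gcongr; exact_mod_cast Real.natLog_le_logb (Fintype.card Δ) 2

/-- Corollary (first claim): a primitive soluble permutation group of degree `n` satisfies
`I(G) ≤ log₂ n + 1`. -/
theorem maxIrr_le_log_of_primitive_solvable (Δ : Type*) [Fintype Δ] (hn : 2 ≤ Fintype.card Δ)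
    (G : Subgroup (Equiv.Perm Δ)) (hsol : IsSolvable G) (hprim : IsPrimitiveSubgroup G) :
    (maxIrr G Δ : ℝ) ≤ Real.logb 2 (Fintype.card Δ) + 1 :=
  maxIrr_le_log_of_primitive_solvable_general Δ G hsol hprim
end

section
/- Let G be a finite group acting faithfully on a finite set Δ, let S be a subgroup of G and let N be a normal subgroup of G. Then I(S) ≤ I(G), and I(G) ≤ I(N) + ℓ(G/N). -/
/-- `ℓ(G)`: the maximum length `l` of a strictly descending chain
`G = G_0 > G_1 > … > G_l = 1` of subgroups of `G`. -/
noncomputable def subgroupChainLength (G : Type*) [Group G] : ℕ :=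
  sSup {n | ∃ c : Fin (n + 1) → Subgroup G, StrictAnti c ∧ c 0 = ⊤ ∧ c (Fin.last n) = ⊥}

/-!
Along a sequence of points `δ₁, δ₂, …`, the pointwise stabiliser in `S` is `S ⊓ G_{(δ₁,…,δᵢ)}`,
so an irredundant base of `S` is an irredundant sequence for `G`; a faithful action lets any
irredundant sequence be extended, one moved point at a time, to an irredundant base.

For the second bound, along an irredundant base of `G` the chain `Gᵢ = G_{(δ₁,…,δᵢ)}` drops at
every step, and by Dedekind's law so does `N ⊓ Gᵢ` or its image `GᵢN/N`. Keeping the points at which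
`N ⊓ Gᵢ` drops gives an irredundant base of `N`, and deleting the repetitions from the chain
`GᵢN/N` gives a strictly descending chain from `G/N` to `1`.
-/

section

variable {G : Type*} [Group G] {Δ : Type*} [MulAction G Δ]

lemma ptStab_append_singleton (H : Subgroup G) (l : List Δ) (δ : Δ) :
    ptStab H (l ++ [δ]) = ptStab H l ⊓ MulAction.stabilizer G δ := by
  simp only [ptStab, List.mem_append, List.mem_singleton, iInf_or, iInf_inf_eq,
    iInf_iInf_eq_left, inf_assoc]

lemma ptStab_anti (H : Subgroup G) {l₁ l₂ : List Δ} (h : l₁ ⊆ l₂) :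
    ptStab H l₂ ≤ ptStab H l₁ :=
  inf_le_inf_left _ (le_iInf₂ fun δ hδ => iInf₂_le δ (h hδ))

lemma antitone_ptStab_take (H : Subgroup G) (l : List Δ) :
    Antitone fun i => ptStab H (l.take i) :=
  fun _ _ hij => ptStab_anti H (List.take_subset_take_left l hij)

lemma ptStab_of_le {S T : Subgroup G} (hST : S ≤ T) (l : List Δ) :
    ptStab S l = S ⊓ ptStab T l := by
  rw [ptStab, ptStab, ← inf_assoc, inf_eq_left.mpr hST]

def IsIrredundant (H : Subgroup G) (l : List Δ) : Prop :=
  ∀ i < l.length, ptStab H (l.take (i + 1)) < ptStab H (l.take i)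

lemma isIrredundant_append_singleton {H : Subgroup G} {l : List Δ} {δ : Δ} :
    IsIrredundant H (l ++ [δ]) ↔ IsIrredundant H l ∧ ptStab H (l ++ [δ]) < ptStab H l := by
  constructor
  · intro h
    refine ⟨fun i hi => ?_, by simpa [List.take_of_length_le] using h l.length (by simp)⟩
    simpa [List.take_append_of_le_length hi, List.take_append_of_le_length hi.le]
      using h i (by simp; omega)
  · rintro ⟨h, hlast⟩ i hi
    rcases Nat.lt_succ_iff_lt_or_eq.mp (by simpa using hi) with hi | rfl
    · simpa [List.take_append_of_le_length hi, List.take_append_of_le_length hi.le] using h i hi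
    · simpa [List.take_of_length_le] using hlast

lemma IsIrredundant.strictAnti {H : Subgroup G} {l : List Δ} (hl : IsIrredundant H l) :
    StrictAnti fun i : Fin (l.length + 1) => ptStab H (l.take i) :=
  Fin.strictAnti_iff_succ_lt.mpr fun i => hl i i.isLt

lemma IsIrredundant.of_le {S T : Subgroup G} {l : List Δ} (hST : S ≤ T) (hl : IsIrredundant S l) :
    IsIrredundant T l := fun i hi =>
  lt_of_le_of_ne (antitone_ptStab_take T l i.le_succ) fun he =>
    (hl i hi).ne (by rw [ptStab_of_le hST, ptStab_of_le hST, he])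

lemma add_one_le_card_of_strictAnti {α : Type*} [Preorder α] [Finite α] {n : ℕ}
    {c : Fin (n + 1) → α} (hc : StrictAnti c) : n + 1 ≤ Nat.card α := by
  simpa using Nat.card_le_card_of_injective c hc.injective

lemma IsIrredundantBase.length_le_maxIrr [Finite G] {H : Subgroup G} {l : List Δ}
    (hl : IsIrredundantBase H l) : l.length ≤ maxIrr H Δ := by
  refine le_csSup ⟨Nat.card (Subgroup G), ?_⟩ ⟨l, hl, rfl⟩
  rintro _ ⟨l', hl', rfl⟩
  have := add_one_le_card_of_strictAnti (IsIrredundant.strictAnti hl'.1)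
  omega

lemma exists_ptStab_append_lt [FaithfulSMul G Δ] {H : Subgroup G} {l : List Δ}
    (h : ptStab H l ≠ ⊥) : ∃ δ : Δ, ptStab H (l ++ [δ]) < ptStab H l := by
  obtain ⟨⟨g, hg⟩, hg1⟩ := Subgroup.ne_bot_iff_exists_ne_one.mp h
  obtain ⟨δ, hδ⟩ : ∃ δ : Δ, g • δ ≠ δ := by
    by_contra! hfix
    exact hg1 (Subtype.ext (eq_of_smul_eq_smul fun δ => by rw [hfix]; simp))
  refine ⟨δ, ?_⟩
  rw [ptStab_append_singleton, inf_lt_left]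
  exact fun hle => hδ (hle hg)

lemma IsIrredundant.exists_isIrredundantBase_append [Finite G] [FaithfulSMul G Δ]
    {H : Subgroup G} {l : List Δ} (hl : IsIrredundant H l) :
    ∃ l' : List Δ, IsIrredundantBase H (l ++ l') := by
  induction hK : ptStab H l using WellFoundedLT.induction generalizing l with
  | _ K ih =>
    by_cases hbot : ptStab H l = ⊥
    · exact ⟨[], by simpa using ⟨hl, hbot⟩⟩
    · obtain ⟨δ, hδ⟩ := exists_ptStab_append_lt hbot
      obtain ⟨l', hl'⟩ := ih _ (hK ▸ hδ) (isIrredundant_append_singleton.mpr ⟨hl, hδ⟩) rfl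
      exact ⟨δ :: l', by simpa using hl'⟩

lemma IsIrredundant.length_le_maxIrr [Finite G] [FaithfulSMul G Δ] {H : Subgroup G}
    {l : List Δ} (hl : IsIrredundant H l) : l.length ≤ maxIrr H Δ := by
  obtain ⟨l', hl'⟩ := hl.exists_isIrredundantBase_append
  calc l.length ≤ (l ++ l').length := by simp
    _ ≤ maxIrr H Δ := hl'.length_le_maxIrr

theorem maxIrr_mono [Finite G] [FaithfulSMul G Δ] {S T : Subgroup G} (hST : S ≤ T) :
    maxIrr S Δ ≤ maxIrr T Δ := by
  refine csSup_le' ?_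
  rintro _ ⟨l, hl, rfl⟩
  exact (IsIrredundant.of_le hST hl.1).length_le_maxIrr

end

noncomputable def dropCount {α : Type*} [Preorder α] (f : ℕ → α) (k : ℕ) : ℕ :=
  open Classical in ((Finset.range k).filter fun i => f (i + 1) < f i).card

section dropCount

variable {α : Type*} [Preorder α] {f : ℕ → α} {k : ℕ}

@[simp]
lemma dropCount_zero (f : ℕ → α) : dropCount f 0 = 0 := by
  simp [dropCount]

lemma dropCount_succ_of_lt (h : f (k + 1) < f k) : dropCount f (k + 1) = dropCount f k + 1 := by
  simp [dropCount, Finset.range_add_one, Finset.filter_insert, h]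

lemma dropCount_succ_of_not_lt (h : ¬f (k + 1) < f k) : dropCount f (k + 1) = dropCount f k := by
  simp [dropCount, Finset.range_add_one, Finset.filter_insert, h]

end dropCount

lemma strictAnti_snoc {α : Type*} [Preorder α] {m : ℕ} {c : Fin (m + 1) → α} (hc : StrictAnti c)
    {x : α} (hx : x < c (Fin.last m)) : StrictAnti (Fin.snoc c x : Fin (m + 2) → α) := by
  refine Fin.strictAnti_iff_succ_lt.mpr fun i => Fin.lastCases ?_ (fun j => ?_) i
  · simpa only [Fin.succ_last, Fin.snoc_last, Fin.snoc_castSucc] using hx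
  · simpa only [Fin.succ_castSucc, Fin.snoc_castSucc] using hc Fin.castSucc_lt_succ

lemma Antitone.exists_strictAnti_dropCount {α : Type*} [PartialOrder α] {f : ℕ → α}
    (hf : Antitone f) (k : ℕ) :
    ∃ c : Fin (dropCount f k + 1) → α, StrictAnti c ∧ c 0 = f 0 ∧ c (Fin.last _) = f k := by
  induction k with
  | zero =>
    rw [dropCount_zero]
    exact ⟨fun _ => f 0, Fin.strictAnti_iff_succ_lt.mpr fun i => i.elim0, rfl, rfl⟩
  | succ k ih =>
    obtain ⟨c, hc, hc0, hck⟩ := ih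
    by_cases hlt : f (k + 1) < f k
    · rw [dropCount_succ_of_lt hlt]
      refine ⟨Fin.snoc c (f (k + 1)), strictAnti_snoc hc (hck ▸ hlt), ?_, Fin.snoc_last _ _⟩
      rw [← Fin.castSucc_zero, Fin.snoc_castSucc, hc0]
    · rw [dropCount_succ_of_not_lt hlt]
      exact ⟨c, hc, hc0, hck.trans ((hf k.le_succ).eq_of_not_lt hlt).symm⟩

lemma dropCount_le_subgroupChainLength {Q : Type*} [Group Q] [Finite Q] {f : ℕ → Subgroup Q}
    (hf : Antitone f) {k : ℕ} (h0 : f 0 = ⊤) (hk : f k = ⊥) :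
    dropCount f k ≤ subgroupChainLength Q := by
  obtain ⟨c, hc, hc0, hck⟩ := hf.exists_strictAnti_dropCount k
  refine le_csSup ⟨Nat.card (Subgroup Q), ?_⟩ ⟨c, hc, hc0.trans h0, hck.trans hk⟩
  rintro n ⟨c, hc, -, -⟩
  have := add_one_le_card_of_strictAnti hc
  omega

section

variable {G : Type*} [Group G] {Δ : Type*} [MulAction G Δ]

lemma exists_isIrredundant_dropCount_le (H : Subgroup G) (l : List Δ) (k : ℕ) :
    ∃ l' : List Δ, IsIrredundant H l' ∧ ptStab H l' = ptStab H (l.take k) ∧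
      dropCount (fun i => ptStab H (l.take i)) k ≤ l'.length := by
  induction k with
  | zero => exact ⟨[], fun i hi => absurd hi (by simp), by simp, by simp⟩
  | succ k ih =>
    obtain ⟨l', hirr, heq, hlen⟩ := ih
    by_cases hlt : ptStab H (l.take (k + 1)) < ptStab H (l.take k)
    · obtain ⟨δ, hδ⟩ : ∃ δ, l.take (k + 1) = l.take k ++ [δ] := by
        rw [List.take_add_one] at hlt ⊢
        cases h : l[k]? with
        | none => simp [h] at hlt
        | some δ => exact ⟨δ, rfl⟩
      have hstab : ptStab H (l' ++ [δ]) = ptStab H (l.take (k + 1)) := by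
        rw [hδ, ptStab_append_singleton, ptStab_append_singleton, heq]
      refine ⟨l' ++ [δ], isIrredundant_append_singleton.mpr ⟨hirr, ?_⟩, hstab, ?_⟩
      · rwa [hstab, heq]
      · rw [dropCount_succ_of_lt hlt]
        simpa using hlen
    · rw [dropCount_succ_of_not_lt hlt]
      exact ⟨l', hirr, heq.trans ((antitone_ptStab_take H l k.le_succ).eq_of_not_lt hlt).symm, hlen⟩

lemma dropCount_ptStab_take_le_maxIrr [Finite G] {H : Subgroup G} {l : List Δ}
    (hl : ptStab H l = ⊥) : dropCount (fun i => ptStab H (l.take i)) l.length ≤ maxIrr H Δ := by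
  obtain ⟨l', hirr, heq, hlen⟩ := exists_isIrredundant_dropCount_le H l l.length
  rw [List.take_length, hl] at heq
  exact hlen.trans (IsIrredundantBase.length_le_maxIrr ⟨hirr, heq⟩)

/-- Dedekind's law: if `A ≤ B ⊔ N` and `N ⊓ A ≤ B`, then `A ≤ B`. -/
lemma inf_lt_inf_or_map_lt_map_of_lt (N : Subgroup G) [N.Normal] {A B : Subgroup G} (h : B < A) :
    N ⊓ B < N ⊓ A ∨ B.map (QuotientGroup.mk' N) < A.map (QuotientGroup.mk' N) := by
  refine or_iff_not_imp_left.mpr fun hN =>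
    lt_of_le_of_ne (Subgroup.map_mono h.le) fun hQ => h.not_ge fun a ha => ?_
  have hinf : N ⊓ A ≤ N ⊓ B := ((inf_le_inf_left N h.le).eq_of_not_lt hN).ge
  have hsup : A ≤ B ⊔ N := by
    have := congrArg (Subgroup.comap (QuotientGroup.mk' N)) hQ
    rw [Subgroup.comap_map_eq, Subgroup.comap_map_eq, QuotientGroup.ker_mk'] at this
    exact this ▸ le_sup_left
  obtain ⟨b, hb, n, hn, rfl⟩ := Subgroup.mem_sup_of_normal_right.mp (hsup ha)
  have hnA : n ∈ A := by simpa using A.mul_mem (A.inv_mem (h.le hb)) ha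
  exact B.mul_mem hb (hinf ⟨hn, hnA⟩).2

lemma le_dropCount_inf_add_dropCount_map (N : Subgroup G) [N.Normal] {f : ℕ → Subgroup G}
    {k : ℕ} (hf : ∀ i < k, f (i + 1) < f i) :
    k ≤ dropCount (fun i => N ⊓ f i) k +
      dropCount (fun i => (f i).map (QuotientGroup.mk' N)) k := by
  unfold dropCount
  refine (Finset.card_range k).ge.trans ((Finset.card_le_card fun i hi => ?_).trans
    (Finset.card_union_le _ _))
  have := inf_lt_inf_or_map_lt_map_of_lt N (hf i (Finset.mem_range.mp hi))
  simp only [Finset.mem_union, Finset.mem_filter]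
  tauto

end

theorem maxIrr_subgroup_and_normal_general (G : Type*) [Group G] [Finite G] (Δ : Type*)
    [MulAction G Δ] [FaithfulSMul G Δ] (S N : Subgroup G) [N.Normal] :
    maxIrr S Δ ≤ maxIrr (⊤ : Subgroup G) Δ ∧
      maxIrr (⊤ : Subgroup G) Δ ≤ maxIrr N Δ + subgroupChainLength (G ⧸ N) := by
  refine ⟨maxIrr_mono le_top, csSup_le' ?_⟩
  rintro _ ⟨l, ⟨hl, hbot⟩, rfl⟩
  have hN : (fun i => N ⊓ ptStab ⊤ (l.take i)) = fun i => ptStab N (l.take i) :=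
    funext fun i => (ptStab_of_le le_top _).symm
  calc l.length
      ≤ dropCount (fun i => N ⊓ ptStab ⊤ (l.take i)) l.length +
          dropCount (fun i => (ptStab ⊤ (l.take i)).map (QuotientGroup.mk' N)) l.length :=
        le_dropCount_inf_add_dropCount_map N hl
    _ ≤ maxIrr N Δ + subgroupChainLength (G ⧸ N) := by
      gcongr
      · rw [hN]
        exact dropCount_ptStab_take_le_maxIrr (by rw [ptStab_of_le le_top, hbot, inf_bot_eq])
      · refine dropCount_le_subgroupChainLength
          (fun _ _ hij => Subgroup.map_mono (antitone_ptStab_take ⊤ l hij)) ?_ ?_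
        · simpa [ptStab] using Subgroup.map_top_of_surjective _ (QuotientGroup.mk'_surjective N)
        · simp only [List.take_length, hbot, Subgroup.map_bot]

/-- Lemma 2.1: for a finite group `G` acting faithfully on a finite set `Δ`, a subgroup `S`
and a normal subgroup `N`, we have `I(S) ≤ I(G)` and `I(G) ≤ I(N) + ℓ(G/N)`. -/
theorem maxIrr_subgroup_and_normal (G : Type*) [Group G] [Finite G] (Δ : Type*) [Finite Δ]
    [MulAction G Δ] [FaithfulSMul G Δ] (S N : Subgroup G) [N.Normal] :
    maxIrr S Δ ≤ maxIrr (⊤ : Subgroup G) Δ ∧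
      maxIrr (⊤ : Subgroup G) Δ ≤ maxIrr N Δ + subgroupChainLength (G ⧸ N) :=
  maxIrr_subgroup_and_normal_general G Δ S N
end
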